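/- Let (G,θ) be a torsion-free oriented pro-ℓ group (i.e., ℓ ≠ 2, or ℓ = 2 and im(θ) ⊆ 1 + 4ℤ_2). Then the following are equivalent: (i) (G,θ) is θ-abelian; (ii) G is isomorphic as an oriented pro-ℓ group to a semidirect product A ⋊ (G/ker θ) with A a free abelian pro-ℓ group on which G/ker θ acts via θ; (iii) K_θ(G) = {1} and ker(θ) is a free abelian pro-ℓ group. -/

import Mathlib

/-!
Write `h ^ a` (`a ∈ ℤ_[p]`) for `padicPow p h a`. In a pro-`p` group `a ↦ h ^ a` is a continuous
homomorphism `ℤ_[p] → G`, injective when `h` has infinite order. So the conjugation rule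
`g h g⁻¹ = h ^ θ(g)` says exactly that the generators of `K_θ(G)` are trivial, which is
(i) ⇔ (iii); and if `ker θ ≠ 1` it makes `θ` continuous, since `θ(g)` is read off from
`g h g⁻¹ = h ^ θ(g)` through the closed embedding `a ↦ h ^ a`.

A continuous `θ` on a pro-`p` group takes values in `1 + pℤ_p` (in `1 + 4ℤ_2` when `p = 2`, by
torsion-freeness), where `‖x ^ n - 1‖ = ‖x - 1‖ ‖n‖`. Pick `g₀` with `‖θ(g₀) - 1‖` maximal. The
powers of `θ(g₀)` are then dense in the image of `θ`, and the formula shows that `θ` is injective on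
the closure of `⟨g₀⟩`; so this closure is a closed complement of `ker θ`, which gives (i) ⇒ (ii).
-/

open scoped Topology

/-- A pro-`p` group: a compact, totally disconnected topological group all of whose
open normal subgroups have `p`-power index. -/
def IsProPGroup (p : ℕ) (G : Type*) [Group G] [TopologicalSpace G] : Prop :=
  CompactSpace G ∧ TotallyDisconnectedSpace G ∧
    ∀ U : Subgroup G, U.Normal → IsOpen (U : Set G) → ∃ k : ℕ, U.index = p ^ k

/-- `p`-adic exponentiation `h ^ λ` for `λ ∈ ℤ_[p]`, defined as the limit of `h ^ n`
as the integer `n` tends `p`-adically to `λ`. -/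
noncomputable def padicPow (p : ℕ) [Fact p.Prime] {G : Type*} [Group G] [TopologicalSpace G]
    (h : G) (lam : ℤ_[p]) : G :=
  haveI : Nonempty G := ⟨1⟩
  Filter.limUnder (Filter.comap (fun n : ℤ => (n : ℤ_[p])) (𝓝 lam)) (fun n : ℤ => h ^ n)

section Oriented

variable (p : ℕ) [Fact p.Prime] {G : Type*} [Group G] [TopologicalSpace G] [IsTopologicalGroup G]

/-- The subgroup `K_θ(G)`: the closed subgroup generated by the elements
`h ^ (-θ(g)) * (g * h * g⁻¹)` with `g ∈ G` and `h ∈ ker θ`. -/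
noncomputable def Ktheta (θ : G →* ℤ_[p]ˣ) : Subgroup G :=
  (Subgroup.closure {x : G | ∃ g h : G, h ∈ θ.ker ∧
      x = padicPow p h (-((θ g : ℤ_[p]ˣ) : ℤ_[p])) * (g * h * g⁻¹)}).topologicalClosure

/-- `I_θ(G)`: the closure of the isolator of `K_θ(G)` in `ker θ`. -/
noncomputable def Itheta (θ : G →* ℤ_[p]ˣ) : Subgroup G :=
  (Subgroup.closure {g : G | g ∈ θ.ker ∧ ∃ k : ℕ, g ^ (p ^ k) ∈ Ktheta p θ}).topologicalClosure

/-- The oriented pro-`p` group `(G,θ)` is torsion-free: `p ≠ 2`, or `im θ ⊆ 1 + 4ℤ₂`. -/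
def OriTorsionFree (θ : G →* ℤ_[p]ˣ) : Prop :=
  p ≠ 2 ∨ ∀ g : G, ∃ y : ℤ_[p], ((θ g : ℤ_[p]ˣ) : ℤ_[p]) = 1 + 4 * y

/-- `(G,θ)` is `θ`-abelian: `ker θ` is a torsion-free abelian group which coincides with
the `θ`-center, i.e. `g h g⁻¹ = h ^ θ(g)` for all `g ∈ G`, `h ∈ ker θ`. -/
noncomputable def IsThetaAbelian (θ : G →* ℤ_[p]ˣ) : Prop :=
  (∀ h₁ ∈ θ.ker, ∀ h₂ ∈ θ.ker, h₁ * h₂ = h₂ * h₁) ∧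
  (∀ h ∈ θ.ker, ∀ n : ℕ, n ≠ 0 → h ^ n = 1 → h = 1) ∧
  (∀ g : G, ∀ h ∈ θ.ker, g * h * g⁻¹ = padicPow p h ((θ g : ℤ_[p]ˣ) : ℤ_[p]))

/-- `(G,θ)` is split `θ`-abelian: it is `θ`-abelian (so `ker θ` is a free abelian pro-`p`
group) and the projection `G → G/ker θ` splits, i.e. `ker θ` has a closed complement. -/
noncomputable def IsSplitThetaAbelian (θ : G →* ℤ_[p]ˣ) : Prop :=
  IsThetaAbelian p θ ∧
    ∃ C : Subgroup G, IsClosed (C : Set G) ∧ C ⊓ θ.ker = ⊥ ∧ C ⊔ θ.ker = ⊤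

/-- `(G,θ)` is Kummerian: `ker θ / K_θ(G)` is a torsion-free (equivalently, free)
abelian pro-`p` group, i.e. `K_θ(G)` is isolated in `ker θ`. -/
noncomputable def IsKummerian (θ : G →* ℤ_[p]ˣ) : Prop :=
  ∀ h ∈ θ.ker, ∀ k : ℕ, h ^ (p ^ k) ∈ Ktheta p θ → h ∈ Ktheta p θ

end Oriented

section Frattini

variable (p : ℕ) (G : Type*) [Group G] [TopologicalSpace G] [IsTopologicalGroup G]

/-- The Frattini subgroup `Φ(G) = cl(G^p [G,G])` of a pro-`p` group. -/
def proFrattini : Subgroup G :=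
  ((Subgroup.closure {x : G | ∃ g : G, x = g ^ p}) ⊔ commutator G).topologicalClosure

/-- `G` is powerful: `[G,G] ⊆ cl(G^p)` (`cl(G^4)` if `p = 2`). -/
def IsPowerfulPro : Prop :=
  (commutator G : Set G) ⊆
    ((Subgroup.closure {x : G | ∃ g : G, x = g ^ (if p = 2 then 4 else p)}).topologicalClosure :
      Set G)

/-- Topologically finitely generated. -/
def IsTopFG : Prop :=
  ∃ S : Finset G, (Subgroup.closure (S : Set G)).topologicalClosure = ⊤

/-- Torsion-free group. -/
def IsTorsionFreeGrp : Prop := ∀ g : G, ∀ n : ℕ, n ≠ 0 → g ^ n = 1 → g = 1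

/-- A uniform (uniformly powerful) pro-`p` group: finitely generated, powerful and
torsion-free. -/
def IsUniformProP : Prop :=
  IsProPGroup p G ∧ IsTopFG G ∧ IsPowerfulPro p G ∧ IsTorsionFreeGrp G

/-- Locally uniform: every closed subgroup is uniform. -/
def IsLocallyUniform : Prop :=
  ∀ H : Subgroup G, IsClosed (H : Set G) → IsUniformProP p H

/-- A free pro-`p` group: a pro-`p` group which is projective with respect to surjections
of finite `p`-groups (equivalently, of cohomological dimension at most one). -/
def IsFreeProP : Prop :=
  IsProPGroup p G ∧
  ∀ (A B : Type) [Group A] [Group B], Finite A → Finite B →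
    IsPGroup p A → IsPGroup p B → ∀ f : A →* B, Function.Surjective f →
    ∀ φ : G →* B, @Continuous G B _ ⊥ φ →
      ∃ ψ : G →* A, @Continuous G A _ ⊥ ψ ∧ f.comp ψ = φ

end Frattini

open Filter Topology

theorem exists_pow_sub_one_eq {R : Type*} [CommRing R] (x : R) (n : ℕ) :
    ∃ q, x ^ n - 1 = (x - 1) * (n + (x - 1) * (n.choose 2 + (x - 1) * q)) := by
  induction n with
  | zero => exact ⟨0, by simp⟩
  | succ n ih =>
    obtain ⟨q, hq⟩ := ih
    refine ⟨q + n.choose 2 + (x - 1) * q, ?_⟩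
    rw [Nat.choose_succ_succ, Nat.choose_one_right]
    push_cast
    linear_combination x * hq

namespace PadicInt

variable {p : ℕ} [Fact p.Prime]

theorem norm_le_inv_of_lt_one {z : ℤ_[p]} (hz : ‖z‖ < 1) : ‖z‖ ≤ (p : ℝ)⁻¹ := by
  obtain ⟨c, rfl⟩ := (norm_lt_one_iff_dvd z).mp hz
  rw [norm_mul, norm_p]
  exact mul_le_of_le_one_right (by positivity) (norm_le_one c)

theorem dvd_of_norm_le {a b : ℤ_[p]} (hb : b ≠ 0) (h : ‖a‖ ≤ ‖b‖) : b ∣ a := by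
  rcases ValuationRing.dvd_total b a with hba | ⟨d, rfl⟩
  · exact hba
  have ha : 0 < ‖a‖ := norm_pos_iff.mpr (left_ne_zero_of_mul hb)
  rw [norm_mul] at h
  have hd : ‖d‖ = 1 := one_le_norm_iff.mp (le_of_mul_le_mul_left (by simpa using h) ha)
  exact (isUnit_iff.mpr hd).mul_right_dvd.mpr dvd_rfl

theorem norm_pow_sub_one_of_coprime {x : ℤ_[p]} (hx : ‖x - 1‖ < 1) {m : ℕ} (hm : p.Coprime m) :
    ‖x ^ m - 1‖ = ‖x - 1‖ := by
  obtain ⟨q, hq⟩ := exists_pow_sub_one_eq x m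
  have hsmall : ‖(x - 1) * (m.choose 2 + (x - 1) * q)‖ < ‖(m : ℤ_[p])‖ := by
    rw [norm_natCast_eq_one_iff.mpr hm, norm_mul]
    exact (mul_le_of_le_one_right (norm_nonneg _) (norm_le_one _)).trans_lt hx
  rw [hq, norm_mul, norm_add_eq_max_of_ne hsmall.ne', max_eq_left hsmall.le,
    norm_natCast_eq_one_iff.mpr hm, mul_one]

theorem norm_pow_prime_sub_one {x : ℤ_[p]} (hx : ‖x - 1‖ < 1) (hx₂ : p = 2 → ‖x - 1‖ < 2⁻¹) :
    ‖x ^ p - 1‖ = ‖x - 1‖ * (p : ℝ)⁻¹ := by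
  obtain ⟨q, hq⟩ := exists_pow_sub_one_eq x p
  have hsmall : ‖(x - 1) * (p.choose 2 + (x - 1) * q)‖ < ‖(p : ℤ_[p])‖ := by
    rw [norm_p, norm_mul]
    have hp := (Fact.out : p.Prime)
    rcases hp.eq_two_or_odd with rfl | hodd
    · calc ‖x - 1‖ * ‖(Nat.choose 2 2 : ℤ_[2]) + (x - 1) * q‖ ≤ ‖x - 1‖ * 1 :=
            mul_le_mul_of_nonneg_left (norm_le_one _) (norm_nonneg _)
        _ < ((2 : ℕ) : ℝ)⁻¹ := by simpa using hx₂ rfl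
    · have hchoose : ‖(p.choose 2 : ℤ_[p])‖ < 1 := norm_natCast_lt_one_iff.mpr <|
        hp.dvd_choose_self two_ne_zero (by have := hp.two_le; omega)
      have hrest : ‖(p.choose 2 : ℤ_[p]) + (x - 1) * q‖ < 1 :=
        norm_lt_one_add hchoose (by rw [mul_comm]; exact norm_lt_one_mul hx)
      calc ‖x - 1‖ * ‖(p.choose 2 : ℤ_[p]) + (x - 1) * q‖ ≤ ‖x - 1‖ * (p : ℝ)⁻¹ :=
            mul_le_mul_of_nonneg_left (norm_le_inv_of_lt_one hrest) (norm_nonneg _)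
        _ < (p : ℝ)⁻¹ := mul_lt_of_lt_one_left (inv_pos.mpr (Nat.cast_pos.mpr hp.pos)) hx
  rw [hq, norm_mul, norm_add_eq_max_of_ne hsmall.ne', max_eq_left hsmall.le, norm_p]

theorem norm_pow_sub_one {x : ℤ_[p]} (hx : ‖x - 1‖ < 1) (hx₂ : p = 2 → ‖x - 1‖ < 2⁻¹) (n : ℕ) :
    ‖x ^ n - 1‖ = ‖x - 1‖ * ‖(n : ℤ_[p])‖ := by
  induction n using Nat.strong_induction_on with
  | _ n ih =>
  by_cases hpn : p ∣ n
  · obtain ⟨m, rfl⟩ := hpn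
    rcases m.eq_zero_or_pos with rfl | hm
    · simp
    have ihm := ih m (lt_mul_left hm (Fact.out : p.Prime).one_lt)
    have hle : ‖x ^ m - 1‖ ≤ ‖x - 1‖ := by
      rw [ihm]
      exact mul_le_of_le_one_right (norm_nonneg _) (norm_le_one _)
    rw [pow_mul', norm_pow_prime_sub_one (hle.trans_lt hx) (fun h => hle.trans_lt (hx₂ h)), ihm,
      Nat.cast_mul, norm_mul, norm_p]
    ring
  · have hcop : p.Coprime n := (Nat.Prime.coprime_iff_not_dvd Fact.out).mpr hpn
    rw [norm_pow_sub_one_of_coprime hx hcop, norm_natCast_eq_one_iff.mpr hcop, mul_one]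

theorem norm_zpow_sub_one {x : ℤ_[p]ˣ} (hx : ‖(x : ℤ_[p]) - 1‖ < 1)
    (hx₂ : p = 2 → ‖(x : ℤ_[p]) - 1‖ < 2⁻¹) (n : ℤ) :
    ‖((x ^ n : ℤ_[p]ˣ) : ℤ_[p]) - 1‖ = ‖(x : ℤ_[p]) - 1‖ * ‖(n : ℤ_[p])‖ := by
  obtain ⟨m, rfl | rfl⟩ := n.eq_nat_or_neg
  · simpa using norm_pow_sub_one hx hx₂ m
  · have h : ((x ^ (-(m : ℤ)) : ℤ_[p]ˣ) : ℤ_[p]) - 1 =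
        -((x ^ m)⁻¹ : ℤ_[p]ˣ) * (((x ^ m : ℤ_[p]ˣ) : ℤ_[p]) - 1) := by
      rw [zpow_neg, zpow_natCast, neg_mul, mul_sub, Units.inv_mul]
      ring
    rw [h, norm_mul, norm_neg, norm_units, one_mul, Units.val_pow_eq_pow_val,
      norm_pow_sub_one hx hx₂, Int.cast_neg, Int.cast_natCast, norm_neg]

theorem exists_pow_norm_sub_le {x y : ℤ_[p]} (hx : ‖x - 1‖ < 1) (hx₂ : p = 2 → ‖x - 1‖ < 2⁻¹)
    (hy : ‖y - 1‖ ≤ ‖x - 1‖) (k : ℕ) : ∃ n : ℕ, ‖y - x ^ n‖ ≤ ‖x - 1‖ * (p : ℝ)⁻¹ ^ k := by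
  induction k with
  | zero => exact ⟨0, by simpa using hy⟩
  | succ k ih =>
    obtain ⟨n, hn⟩ := ih
    set w := x ^ p ^ k
    have hw : ‖w - 1‖ = ‖x - 1‖ * (p : ℝ)⁻¹ ^ k := by
      rw [norm_pow_sub_one hx hx₂, Nat.cast_pow, norm_pow, norm_p]
    by_cases hw0 : w - 1 = 0
    · exact ⟨n, hn.trans (by rw [← hw, hw0, norm_zero]; positivity)⟩
    obtain ⟨c, hc⟩ := dvd_of_norm_le hw0 (hn.trans hw.ge)
    obtain ⟨m, hm⟩ : ∃ m : ℕ, (p : ℤ_[p]) ∣ c - m := by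
      obtain ⟨m, hm⟩ := denseRange_natCast.exists_dist_lt c one_pos
      exact ⟨m, (norm_lt_one_iff_dvd _).mp (by rwa [dist_eq_norm] at hm)⟩
    obtain ⟨q, hq⟩ := exists_pow_sub_one_eq w m
    have hx1 : (p : ℤ_[p]) ∣ x - 1 := (norm_lt_one_iff_dvd _).mp hx
    -- With `y - x ^ n = (w - 1) c` and `m ≡ c [p]`, `x ^ n * w ^ m` is one `p`-adic digit closer
    -- to `y`, because `x ^ n ≡ 1 [p]`.
    obtain ⟨d, hd⟩ : (p : ℤ_[p]) ∣
        (c - m) - (x ^ n - 1) * m - x ^ n * (w - 1) * (m.choose 2 + (w - 1) * q) :=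
      dvd_sub (dvd_sub hm (dvd_mul_of_dvd_left (hx1.trans (sub_one_dvd_pow_sub_one x n)) _))
        (dvd_mul_of_dvd_left (dvd_mul_of_dvd_right
          (hx1.trans (sub_one_dvd_pow_sub_one x _)) _) _)
    refine ⟨n + p ^ k * m, ?_⟩
    have key : y - x ^ (n + p ^ k * m) = (w - 1) * (p * d) := by
      rw [← hd, pow_add, pow_mul]
      linear_combination hc - x ^ n * hq
    rw [key, norm_mul, norm_mul, norm_p, hw, pow_succ]
    calc ‖x - 1‖ * (p : ℝ)⁻¹ ^ k * ((p : ℝ)⁻¹ * ‖d‖)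
        ≤ ‖x - 1‖ * (p : ℝ)⁻¹ ^ k * ((p : ℝ)⁻¹ * 1) := by gcongr; exact norm_le_one d
      _ = ‖x - 1‖ * ((p : ℝ)⁻¹ ^ k * (p : ℝ)⁻¹) := by ring

theorem mem_closure_range_pow {x y : ℤ_[p]} (hx : ‖x - 1‖ < 1) (hx₂ : p = 2 → ‖x - 1‖ < 2⁻¹)
    (hy : ‖y - 1‖ ≤ ‖x - 1‖) : y ∈ closure (Set.range (x ^ · : ℕ → ℤ_[p])) := by
  rw [Metric.mem_closure_iff]
  intro ε hε
  have hp : (1 : ℝ) < p := by exact_mod_cast (Fact.out : p.Prime).one_lt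
  obtain ⟨k, hk⟩ := exists_pow_lt_of_lt_one hε (inv_lt_one_of_one_lt₀ hp)
  obtain ⟨n, hn⟩ := exists_pow_norm_sub_le hx hx₂ hy k
  refine ⟨x ^ n, ⟨n, rfl⟩, ?_⟩
  rw [dist_eq_norm]
  calc ‖y - x ^ n‖ ≤ ‖x - 1‖ * (p : ℝ)⁻¹ ^ k := hn
    _ ≤ (p : ℝ)⁻¹ ^ k := mul_le_of_le_one_left (by positivity) hx.le
    _ < ε := hk

instance comap_intCast_nhds_neBot (a : ℤ_[p]) : (comap ((↑) : ℤ → ℤ_[p]) (𝓝 a)).NeBot :=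
  comap_neBot fun s hs => by
    obtain ⟨_, hs, n, rfl⟩ := mem_closure_iff_nhds.mp (denseRange_intCast a) s hs
    exact ⟨n, hs⟩

theorem eventually_dist_intCast_le (a : ℤ_[p]) (k : ℕ) :
    ∀ᶠ n : ℤ in comap ((↑) : ℤ → ℤ_[p]) (𝓝 a), dist (n : ℤ_[p]) a ≤ (p : ℝ) ^ (-k : ℤ) :=
  preimage_mem_comap <|
    Metric.closedBall_mem_nhds a (by have := (Fact.out : p.Prime).pos; positivity)

theorem norm_intCast_sub_le {a : ℤ_[p]} {r : ℝ} {n m : ℤ} (hn : dist (n : ℤ_[p]) a ≤ r)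
    (hm : dist (m : ℤ_[p]) a ≤ r) : ‖((n - m : ℤ) : ℤ_[p])‖ ≤ r := by
  rw [Int.cast_sub, ← dist_eq_norm]
  exact dist_triangle_max _ a _ |>.trans (max_le hn (dist_comm a _ ▸ hm))

end PadicInt

namespace IsProPGroup

variable {p : ℕ} {G : Type*} [Group G] [TopologicalSpace G]

theorem map_eq_one_of_coprime (hG : IsProPGroup p G) {H : Type*} [Group H] [Finite H]
    (φ : G →* H) (hφ : IsOpen (φ.ker : Set G)) (hH : p.Coprime (Nat.card H)) (g : G) :
    φ g = 1 := by
  obtain ⟨k, hk⟩ := hG.2.2 φ.ker inferInstance hφ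
  have hdvd : p ^ k ∣ Nat.card H :=
    hk ▸ Subgroup.index_ker φ ▸ Subgroup.card_subgroup_dvd_card φ.range
  have hker : φ.ker = ⊤ :=
    Subgroup.index_eq_one.mp (hk.trans ((hH.pow_left k).eq_one_of_dvd hdvd))
  exact φ.mem_ker.mp (hker ▸ Subgroup.mem_top g)

variable [IsTopologicalGroup G]

theorem t2Space (hG : IsProPGroup p G) : T2Space G := by
  rw [IsTopologicalGroup.t2Space_iff_one_closed,
    ← totallyDisconnectedSpace_iff_connectedComponent_singleton.mp hG.2.1 1]
  exact isClosed_connectedComponent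

theorem exists_openSubgroup_subset (hG : IsProPGroup p G) {N : Set G} (hN : N ∈ 𝓝 (1 : G)) :
    ∃ U : Subgroup G, IsOpen (U : Set G) ∧ (U : Set G) ⊆ N ∧ ∃ k : ℕ, ∀ x : G, x ^ p ^ k ∈ U := by
  have := hG.1
  have := hG.2.1
  have := hG.t2Space
  obtain ⟨s, ⟨h1s, hs⟩, hsN⟩ := (nhds_basis_clopen (1 : G)).mem_iff.mp hN
  obtain ⟨H, hH⟩ := IsTopologicalGroup.exist_openNormalSubgroup_sub_clopen_nhds_of_one hs h1s
  obtain ⟨k, hk⟩ := hG.2.2 H.toSubgroup H.isNormal' H.isOpen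
  exact ⟨H.toSubgroup, H.isOpen, hH.trans hsN, k, fun x => hk ▸ H.toSubgroup.pow_index_mem x⟩

theorem eq_one_of_forall_mem (hG : IsProPGroup p G) {x : G}
    (hx : ∀ U : Subgroup G, IsOpen (U : Set G) → ∀ k : ℕ, (∀ y : G, y ^ p ^ k ∈ U) → x ∈ U) :
    x = 1 := by
  have := hG.t2Space
  by_contra hx1
  obtain ⟨U, hUo, hUx, k, hk⟩ :=
    hG.exists_openSubgroup_subset (isOpen_compl_singleton.mem_nhds (Ne.symm hx1))
  exact hUx (hx U hUo k hk) rfl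

end IsProPGroup

theorem zpow_mem_of_norm_le {p : ℕ} [Fact p.Prime] {G : Type*} [Group G] {U : Subgroup G}
    {k : ℕ} (hU : ∀ x : G, x ^ p ^ k ∈ U) (h : G) {n : ℤ}
    (hn : ‖(n : ℤ_[p])‖ ≤ (p : ℝ) ^ (-k : ℤ)) : h ^ n ∈ U := by
  obtain ⟨d, rfl⟩ := PadicInt.norm_int_le_pow_iff_dvd.mp hn
  rw [zpow_mul]
  exact U.zpow_mem (by exact_mod_cast hU h) d

section PadicPow

variable {p : ℕ} [Fact p.Prime] {G : Type*} [Group G] [TopologicalSpace G] [IsTopologicalGroup G]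

theorem tendsto_zpow_padicPow (hG : IsProPGroup p G) (h : G) (a : ℤ_[p]) :
    Tendsto (h ^ · : ℤ → G) (comap (↑) (𝓝 a)) (𝓝 (padicPow p h a)) := by
  have := hG.1
  apply tendsto_nhds_limUnder
  obtain ⟨b, hb⟩ := exists_clusterPt_of_compactSpace (map (h ^ · : ℤ → G) (comap (↑) (𝓝 a)))
  -- `n ↦ h ^ n` is constant modulo `U` on residue classes mod `p ^ k`, so a cluster point
  -- is a limit.
  refine ⟨b, fun N hN => ?_⟩
  obtain ⟨U, hUo, hUN, k, hk⟩ := hG.exists_openSubgroup_subset (N := (b * ·) ⁻¹' N)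
    ((continuous_const_mul b).continuousAt.preimage_mem_nhds (by rwa [mul_one]))
  have hV : {y | b⁻¹ * y ∈ U} ∈ 𝓝 b :=
    (hUo.preimage (continuous_const_mul b⁻¹)).mem_nhds (by simp)
  obtain ⟨n₀, hbn₀, hn₀⟩ := ((mapClusterPt_iff_frequently.mp hb _ hV).and_eventually
    (PadicInt.eventually_dist_intCast_le a k)).exists
  rw [mem_map]
  filter_upwards [PadicInt.eventually_dist_intCast_le a k] with m hm
  have hmem : b⁻¹ * h ^ m ∈ U := by
    have hsplit : b⁻¹ * h ^ m = b⁻¹ * h ^ n₀ * h ^ (m - n₀) := by group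
    rw [hsplit]
    exact U.mul_mem hbn₀ (zpow_mem_of_norm_le hk h (PadicInt.norm_intCast_sub_le hm hn₀))
  simpa using hUN hmem

theorem inv_zpow_mul_padicPow_mem (hG : IsProPGroup p G) {U : Subgroup G}
    (hUo : IsOpen (U : Set G)) {k : ℕ} (hk : ∀ x : G, x ^ p ^ k ∈ U) (h : G) {a : ℤ_[p]} {n : ℤ}
    (hn : dist (n : ℤ_[p]) a ≤ (p : ℝ) ^ (-k : ℤ)) : (h ^ n)⁻¹ * padicPow p h a ∈ U := by
  have hclosed : IsClosed {y : G | (h ^ n)⁻¹ * y ∈ U} :=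
    (U.isClosed_of_isOpen hUo).preimage (continuous_const_mul _)
  apply hclosed.mem_of_tendsto (tendsto_zpow_padicPow hG h a)
  filter_upwards [PadicInt.eventually_dist_intCast_le a k] with m hm
  rw [← zpow_neg, ← zpow_add, neg_add_eq_sub]
  exact zpow_mem_of_norm_le hk h (PadicInt.norm_intCast_sub_le hm hn)

theorem padicPow_intCast (hG : IsProPGroup p G) (h : G) (n : ℤ) : padicPow p h n = h ^ n :=
  (inv_mul_eq_one.mp (hG.eq_one_of_forall_mem fun _ hUo _ hk =>
    inv_zpow_mul_padicPow_mem hG hUo hk h (by rw [dist_self]; positivity))).symm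

theorem padicPow_zero (hG : IsProPGroup p G) (h : G) : padicPow p h 0 = 1 := by
  simpa using padicPow_intCast hG h 0

theorem continuous_padicPow (hG : IsProPGroup p G) (h : G) : Continuous (padicPow p h) := by
  refine continuous_iff_continuousAt.mpr fun a N hN => mem_map.mpr ?_
  obtain ⟨U, hUo, hUN, k, hk⟩ := hG.exists_openSubgroup_subset (N := (padicPow p h a * ·) ⁻¹' N)
    ((continuous_const_mul _).continuousAt.preimage_mem_nhds (by rwa [mul_one]))
  obtain ⟨n, hn⟩ := (PadicInt.eventually_dist_intCast_le a k).exists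
  have hball : Metric.closedBall a ((p : ℝ) ^ (-k : ℤ)) ∈ 𝓝 a :=
    Metric.closedBall_mem_nhds a (by have := (Fact.out : p.Prime).pos; positivity)
  filter_upwards [hball] with b hb
  have hnb : dist (n : ℤ_[p]) b ≤ (p : ℝ) ^ (-k : ℤ) :=
    (dist_triangle_max _ a _).trans (max_le hn (dist_comm b a ▸ hb))
  have hmem := U.mul_mem (U.inv_mem (inv_zpow_mul_padicPow_mem hG hUo hk h hn))
    (inv_zpow_mul_padicPow_mem hG hUo hk h hnb)
  rw [mul_inv_rev, inv_inv, mul_assoc, mul_inv_cancel_left] at hmem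
  simpa using hUN hmem

theorem padicPow_add (hG : IsProPGroup p G) (h : G) (a b : ℤ_[p]) :
    padicPow p h (a + b) = padicPow p h a * padicPow p h b := by
  have := hG.t2Space
  have hcont := continuous_padicPow hG h
  refine congrFun (Continuous.ext_on
    (PadicInt.denseRange_intCast.prodMap PadicInt.denseRange_intCast)
    (f := fun q : ℤ_[p] × ℤ_[p] => padicPow p h (q.1 + q.2))
    (g := fun q => padicPow p h q.1 * padicPow p h q.2)
    (hcont.comp continuous_add) ((hcont.comp continuous_fst).mul (hcont.comp continuous_snd))
    ?_) (a, b)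
  rintro _ ⟨⟨m, n⟩, rfl⟩
  simp [← Int.cast_add, padicPow_intCast hG, zpow_add]

theorem padicPow_neg (hG : IsProPGroup p G) (h : G) (a : ℤ_[p]) :
    padicPow p h (-a) = (padicPow p h a)⁻¹ :=
  eq_inv_of_mul_eq_one_left (by rw [← padicPow_add hG, neg_add_cancel, padicPow_zero hG])

theorem padicPow_intCast_mul (hG : IsProPGroup p G) (h : G) (n : ℤ) (a : ℤ_[p]) :
    padicPow p h (n * a) = padicPow p h a ^ n := by
  induction n using Int.induction_on with
  | zero => simp [padicPow_zero hG]
  | succ n ih => rw [Int.cast_add, Int.cast_one, add_one_mul, padicPow_add hG, ih, zpow_add_one]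
  | pred n ih =>
    rw [Int.cast_sub, Int.cast_one, sub_one_mul, sub_eq_add_neg, padicPow_add hG, ih,
      padicPow_neg hG, zpow_sub_one]

theorem one_padicPow (hG : IsProPGroup p G) (a : ℤ_[p]) : padicPow p (1 : G) a = 1 := by
  have := hG.t2Space
  exact tendsto_nhds_unique (tendsto_zpow_padicPow hG 1 a) (by simp)

theorem padicPow_mul (hG : IsProPGroup p G) (h : G) (a b : ℤ_[p]) :
    padicPow p h (a * b) = padicPow p (padicPow p h a) b := by
  have := hG.t2Space
  refine congrFun (Continuous.ext_on PadicInt.denseRange_intCast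
    ((continuous_padicPow hG h).comp (continuous_const_mul a)) (continuous_padicPow hG _) ?_) b
  rintro _ ⟨n, rfl⟩
  simp only [Function.comp_apply]
  rw [mul_comm, padicPow_intCast_mul hG, padicPow_intCast hG]

theorem padicPow_injective (hG : IsProPGroup p G) {h : G} (hh : ∀ k : ℕ, h ^ p ^ k ≠ 1) :
    Function.Injective (padicPow p h) := by
  intro a b hab
  by_contra hne
  have hν : padicPow p h (a - b) = 1 := by
    rw [sub_eq_add_neg, padicPow_add hG, padicPow_neg hG, hab, mul_inv_cancel]
  have hν0 : a - b ≠ 0 := sub_ne_zero.mpr hne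
  -- `a - b = u p ^ j` with `u` a unit, so `h ^ p ^ j = (h ^ (a - b)) ^ u⁻¹ = 1`.
  apply hh (a - b).valuation
  have hpj : (((p ^ (a - b).valuation : ℕ) : ℤ) : ℤ_[p]) =
      (a - b) * ((PadicInt.unitCoeff hν0)⁻¹ : ℤ_[p]ˣ) :=
    calc (((p ^ (a - b).valuation : ℕ) : ℤ) : ℤ_[p])
        = ((PadicInt.unitCoeff hν0)⁻¹ : ℤ_[p]ˣ) *
            (PadicInt.unitCoeff hν0 * (p : ℤ_[p]) ^ (a - b).valuation) := by
          rw [← mul_assoc, Units.inv_mul, one_mul]; push_cast; rfl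
      _ = (a - b) * ((PadicInt.unitCoeff hν0)⁻¹ : ℤ_[p]ˣ) := by
          rw [← PadicInt.unitCoeff_spec hν0, mul_comm]
  rw [← zpow_natCast, ← padicPow_intCast hG, hpj, padicPow_mul hG, hν, one_padicPow hG]

end PadicPow

theorem OriTorsionFree.norm_sub_one_lt_two_inv {p : ℕ} [Fact p.Prime] {G : Type*} [Group G]
    {θ : G →* ℤ_[p]ˣ} (htf : OriTorsionFree p θ) (g : G) (hp : p = 2) :
    ‖(θ g : ℤ_[p]) - 1‖ < 2⁻¹ := by
  subst hp
  obtain ⟨y, hy⟩ := htf.resolve_left (not_not.mpr rfl) g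
  have h4 : ‖(4 : ℤ_[2])‖ = 4⁻¹ := by
    have h := PadicInt.norm_p_pow (p := 2) 2
    norm_num at h
    rw [h, one_div]
  rw [hy, add_sub_cancel_left, norm_mul, h4]
  calc (4 : ℝ)⁻¹ * ‖y‖ ≤ 4⁻¹ * 1 := by gcongr; exact PadicInt.norm_le_one y
    _ < 2⁻¹ := by norm_num

section Orientation

variable {p : ℕ} [Fact p.Prime] {G : Type*} [Group G] [TopologicalSpace G]

theorem norm_orientation_sub_one_lt_one (hG : IsProPGroup p G) (θ : G →* ℤ_[p]ˣ)
    (hθ : Continuous fun g => (θ g : ℤ_[p])) (g : G) : ‖(θ g : ℤ_[p]) - 1‖ < 1 := by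
  let φ : G →* (ZMod p)ˣ := (Units.map PadicInt.toZMod.toMonoidHom).comp θ
  have hφ : ∀ g, φ g = 1 ↔ ‖(θ g : ℤ_[p]) - 1‖ < 1 := fun g => by
    have hval : (φ g : ZMod p) = PadicInt.toZMod (θ g : ℤ_[p]) := rfl
    rw [Units.ext_iff, hval, Units.val_one, ← sub_eq_zero, ← map_one PadicInt.toZMod, ← map_sub,
      ← RingHom.mem_ker, PadicInt.ker_toZMod, IsLocalRing.mem_maximalIdeal, PadicInt.mem_nonunits]
  have hopen : IsOpen (φ.ker : Set G) := by
    have hker : (φ.ker : Set G) = (fun g => (θ g : ℤ_[p])) ⁻¹' Metric.ball 1 1 := by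
      ext g
      simp [hφ, dist_eq_norm]
    exact hker ▸ Metric.isOpen_ball.preimage hθ
  have hcop : p.Coprime (Nat.card (ZMod p)ˣ) := by
    rw [Nat.card_eq_fintype_card, ZMod.card_units,
      Nat.coprime_self_sub_right (Fact.out : p.Prime).one_lt.le]
    exact Nat.coprime_one_right p
  exact (hφ g).mp (hG.map_eq_one_of_coprime φ hopen hcop g)

variable [IsTopologicalGroup G]

theorem ktheta_eq_bot_iff (hG : IsProPGroup p G) (θ : G →* ℤ_[p]ˣ) :
    Ktheta p θ = ⊥ ↔ ∀ g : G, ∀ h ∈ θ.ker, g * h * g⁻¹ = padicPow p h (θ g : ℤ_[p]) := by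
  have := hG.t2Space
  have hgen : ∀ g h : G, padicPow p h (-(θ g : ℤ_[p])) * (g * h * g⁻¹) = 1 ↔
      g * h * g⁻¹ = padicPow p h (θ g : ℤ_[p]) := fun g h => by
    rw [padicPow_neg hG, inv_mul_eq_one, eq_comm]
  constructor
  · intro hK g h hh
    have hmem : padicPow p h (-(θ g : ℤ_[p])) * (g * h * g⁻¹) ∈ Ktheta p θ :=
      Subgroup.le_topologicalClosure _ (Subgroup.subset_closure ⟨g, h, hh, rfl⟩)
    rwa [hK, Subgroup.mem_bot, hgen] at hmem
  · intro hconj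
    rw [Ktheta, Subgroup.closure_eq_bot_iff.mpr (by
      rintro _ ⟨g, h, hh, rfl⟩
      exact (hgen g h).mpr (hconj g h hh))]
    exact eq_bot_iff.mpr (Subgroup.topologicalClosure_minimal _ le_rfl (by simp))

theorem IsThetaAbelian.continuous_val (hG : IsProPGroup p G) {θ : G →* ℤ_[p]ˣ}
    (hθ : IsThetaAbelian p θ) {h : G} (hh : h ∈ θ.ker) (hh1 : h ≠ 1) :
    Continuous fun g => (θ g : ℤ_[p]) := by
  have := hG.t2Space
  have hinj := padicPow_injective hG (h := h) fun k hk =>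
    hh1 (hθ.2.1 h hh (p ^ k) (pow_ne_zero _ (Fact.out : p.Prime).ne_zero) hk)
  refine ((continuous_padicPow hG h).isClosedEmbedding hinj).isInducing.continuous_iff.mpr ?_
  have hconj : padicPow p h ∘ (fun g => (θ g : ℤ_[p])) = fun g => g * h * g⁻¹ :=
    funext fun g => (hθ.2.2 g h hh).symm
  rw [hconj]
  fun_prop

theorem topologicalClosure_zpowers_inf_ker_eq_bot (hG : IsProPGroup p G) (θ : G →* ℤ_[p]ˣ)
    (hθ : Continuous fun g => (θ g : ℤ_[p])) {g₀ : G} (hx : ‖(θ g₀ : ℤ_[p]) - 1‖ < 1)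
    (hx₂ : p = 2 → ‖(θ g₀ : ℤ_[p]) - 1‖ < 2⁻¹) (hg₀ : θ g₀ ≠ 1) :
    (Subgroup.zpowers g₀).topologicalClosure ⊓ θ.ker = ⊥ := by
  refine eq_bot_iff.mpr fun x hxCK => ?_
  obtain ⟨hxC, hxK⟩ := Subgroup.mem_inf.mp hxCK
  rw [← SetLike.mem_coe, Subgroup.topologicalClosure_coe] at hxC
  rw [MonoidHom.mem_ker] at hxK
  refine Subgroup.mem_bot.mpr (hG.eq_one_of_forall_mem fun U hUo k hk => ?_)
  have hρ : 0 < ‖(θ g₀ : ℤ_[p]) - 1‖ :=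
    norm_pos_iff.mpr (sub_ne_zero.mpr (Units.val_eq_one.not.mpr hg₀))
  -- Some `g₀ ^ n ∈ x U` has `θ (g₀ ^ n)` so close to `θ x = 1` that `p ^ k ∣ n`, whence `x ∈ U`.
  have hV : {y | x⁻¹ * y ∈ U} ∩ (fun g => (θ g : ℤ_[p])) ⁻¹'
      Metric.ball 1 (‖(θ g₀ : ℤ_[p]) - 1‖ * (p : ℝ) ^ (-k : ℤ)) ∈ 𝓝 x := by
    refine inter_mem ((hUo.preimage (continuous_const_mul x⁻¹)).mem_nhds (by simp)) ?_
    refine hθ.continuousAt.preimage_mem_nhds ?_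
    rw [hxK, Units.val_one]
    exact Metric.ball_mem_nhds _ (by have := (Fact.out : p.Prime).pos; positivity)
  obtain ⟨_, ⟨hyU, hyθ⟩, hyC⟩ := mem_closure_iff_nhds.mp hxC _ hV
  obtain ⟨n, rfl⟩ := Subgroup.mem_zpowers_iff.mp hyC
  have hn : ‖(n : ℤ_[p])‖ ≤ (p : ℝ) ^ (-k : ℤ) := by
    rw [Set.mem_preimage, Metric.mem_ball, dist_eq_norm, map_zpow,
      PadicInt.norm_zpow_sub_one hx hx₂] at hyθ
    exact (lt_of_mul_lt_mul_left hyθ hρ.le).le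
  simpa using U.mul_mem hyU (U.inv_mem (zpow_mem_of_norm_le hk g₀ hn))

theorem topologicalClosure_zpowers_sup_ker_eq_top (hG : IsProPGroup p G) (θ : G →* ℤ_[p]ˣ)
    (hθ : Continuous fun g => (θ g : ℤ_[p])) {g₀ : G} (hx : ‖(θ g₀ : ℤ_[p]) - 1‖ < 1)
    (hx₂ : p = 2 → ‖(θ g₀ : ℤ_[p]) - 1‖ < 2⁻¹)
    (hmax : ∀ g, ‖(θ g : ℤ_[p]) - 1‖ ≤ ‖(θ g₀ : ℤ_[p]) - 1‖) :
    (Subgroup.zpowers g₀).topologicalClosure ⊔ θ.ker = ⊤ := by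
  have := hG.1
  set C := (Subgroup.zpowers g₀).topologicalClosure
  refine eq_top_iff.mpr fun g _ => ?_
  have hCθ : IsClosed ((fun c => (θ c : ℤ_[p])) '' C) :=
    ((Subgroup.zpowers g₀).isClosed_topologicalClosure.isCompact.image hθ).isClosed
  obtain ⟨c, hc, hcg⟩ : (θ g : ℤ_[p]) ∈ (fun c => (θ c : ℤ_[p])) '' C := by
    refine (hCθ.closure_subset_iff.mpr ?_) (PadicInt.mem_closure_range_pow hx hx₂ (hmax g))
    rintro _ ⟨n, rfl⟩
    exact ⟨g₀ ^ n, (Subgroup.zpowers g₀).le_topologicalClosure (Subgroup.npow_mem_zpowers g₀ n),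
      by simp⟩
  have hker : c⁻¹ * g ∈ θ.ker := by
    rw [MonoidHom.mem_ker, map_mul, map_inv, Units.ext hcg, inv_mul_cancel]
  simpa using Subgroup.mul_mem _ (Subgroup.mem_sup_left hc) (Subgroup.mem_sup_right hker)

theorem exists_isClosed_complement_ker (hG : IsProPGroup p G) (θ : G →* ℤ_[p]ˣ)
    (hθ : Continuous fun g => (θ g : ℤ_[p])) (htf : OriTorsionFree p θ) :
    ∃ C : Subgroup G, IsClosed (C : Set G) ∧ C ⊓ θ.ker = ⊥ ∧ C ⊔ θ.ker = ⊤ := by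
  have := hG.1
  have := hG.t2Space
  have hx := norm_orientation_sub_one_lt_one hG θ hθ
  obtain ⟨g₀, -, hg₀⟩ := isCompact_univ.exists_isMaxOn Set.univ_nonempty
    (hθ.sub continuous_const).norm.continuousOn
  have hmax : ∀ g, ‖(θ g : ℤ_[p]) - 1‖ ≤ ‖(θ g₀ : ℤ_[p]) - 1‖ := fun g => hg₀ (Set.mem_univ g)
  by_cases hg₀1 : θ g₀ = 1
  · refine ⟨⊥, by simp, bot_inf_eq _, bot_sup_eq _ |>.trans (eq_top_iff.mpr fun g _ => ?_)⟩
    have hg := hmax g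
    rw [hg₀1, Units.val_one, sub_self, norm_zero, norm_le_zero_iff, sub_eq_zero] at hg
    exact θ.mem_ker.mpr (Units.ext hg)
  · exact ⟨_, Subgroup.isClosed_topologicalClosure _,
      topologicalClosure_zpowers_inf_ker_eq_bot hG θ hθ (hx g₀) (htf.norm_sub_one_lt_two_inv g₀) hg₀1,
      topologicalClosure_zpowers_sup_ker_eq_top hG θ hθ (hx g₀) (htf.norm_sub_one_lt_two_inv g₀) hmax⟩

theorem IsThetaAbelian.isSplitThetaAbelian (hG : IsProPGroup p G) {θ : G →* ℤ_[p]ˣ}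
    (htf : OriTorsionFree p θ) (hθ : IsThetaAbelian p θ) : IsSplitThetaAbelian p θ := by
  refine ⟨hθ, ?_⟩
  rcases θ.ker.bot_or_exists_ne_one with hker | ⟨h, hh, hh1⟩
  · exact ⟨⊤, by simp, by rw [hker, inf_bot_eq], top_sup_eq _⟩
  · exact exists_isClosed_complement_ker hG θ (hθ.continuous_val hG hh hh1) htf

end Orientation

attribute [local instance] Subgroup.is_normal_topologicalClosure
/-- For a torsion-free oriented pro-`p` group `(G,θ)` the following are
equivalent: (i) `(G,θ)` is `θ`-abelian; (ii) `(G,θ)` is split `θ`-abelian; (iii)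
`K_θ(G) = 1` and `ker θ` is a free abelian (= torsion-free abelian) pro-`p` group. -/
theorem stmt3 (p : ℕ) [Fact p.Prime] (G : Type) [Group G] [TopologicalSpace G]
    [IsTopologicalGroup G] (hG : IsProPGroup p G) (θ : G →* ℤ_[p]ˣ)
    (htf : OriTorsionFree p θ) :
    List.TFAE [IsThetaAbelian p θ,
      IsSplitThetaAbelian p θ,
      Ktheta p θ = ⊥ ∧ (∀ h₁ ∈ θ.ker, ∀ h₂ ∈ θ.ker, h₁ * h₂ = h₂ * h₁) ∧
        (∀ h ∈ θ.ker, ∀ n : ℕ, n ≠ 0 → h ^ n = 1 → h = 1)] := by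
  tfae_have 1 → 2 := IsThetaAbelian.isSplitThetaAbelian hG htf
  tfae_have 2 → 1 := And.left
  tfae_have 1 → 3 := fun ⟨hcomm, htor, hconj⟩ => ⟨(ktheta_eq_bot_iff hG θ).mpr hconj, hcomm, htor⟩
  tfae_have 3 → 1 := fun ⟨hK, hcomm, htor⟩ => ⟨hcomm, htor, (ktheta_eq_bot_iff hG θ).mp hK⟩
  tfae_finish
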